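/- arXiv:1302.2875 — 4 statements merged into one kernel-verified Lean document; each statement's English description precedes it below -/
import Mathlib

section
/- Let n ∈ ℕ and let J, Λ ∈ Mₙ(ℂ) be constant matrices. Suppose Q, Σ, V : ℝ → Mₙ(ℂ) are differentiable matrix-valued functions satisfying V'(t) = J·V(t)·Λ + Q(t)·V(t) and Σ'(t) = (J·Σ(t) + Q(t))·Σ(t) − Σ(t)·(J·Σ(t) + Q(t)) for all t. Then the matrix function U(t) := V(t)·Λ − Σ(t)·V(t) satisfies U'(t) = J·U(t)·Λ + (Q(t) + J·Σ(t) − Σ(t)·J)·U(t) for all t. -/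
set_option autoImplicit false

section EntrywiseProductRule

variable {𝕜 R : Type*} [NontriviallyNormedField 𝕜] [NormedRing R] [NormedAlgebra 𝕜 R]
  {l m n : Type*} [Fintype m]

theorem Matrix.hasDerivAt_mul_apply {A : 𝕜 → Matrix l m R} {B : 𝕜 → Matrix m n R}
    {A' : Matrix l m R} {B' : Matrix m n R} {t : 𝕜}
    (hA : ∀ i j, HasDerivAt (fun s => A s i j) (A' i j) t)
    (hB : ∀ i j, HasDerivAt (fun s => B s i j) (B' i j) t) (i : l) (j : n) :
    HasDerivAt (fun s => (A s * B s) i j) ((A' * B t + A t * B') i j) t := by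
  simp only [Matrix.mul_apply, Matrix.add_apply, ← Finset.sum_add_distrib]
  exact HasDerivAt.fun_sum fun k _ => (hA i k).fun_mul (hB k j)

theorem Matrix.hasDerivAt_mul_const_apply {A : 𝕜 → Matrix l m R} {A' : Matrix l m R}
    (B : Matrix m n R) {t : 𝕜} (hA : ∀ i j, HasDerivAt (fun s => A s i j) (A' i j) t)
    (i : l) (j : n) :
    HasDerivAt (fun s => (A s * B) i j) ((A' * B) i j) t := by
  simp only [Matrix.mul_apply]
  exact HasDerivAt.fun_sum fun k _ => (hA i k).mul_const (B k j)

end EntrywiseProductRule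

/-- Product rule for `U = VΛ − ΣV`, with `V'` and `Σ'` substituted from the two Lax equations. -/
theorem darboux_derivative_eq {R : Type*} [Ring R] (J Λ Q Sg V : R) :
    (J * V * Λ + Q * V) * Λ
        - (((J * Sg + Q) * Sg - Sg * (J * Sg + Q)) * V + Sg * (J * V * Λ + Q * V))
      = J * (V * Λ - Sg * V) * Λ + (Q + J * Sg - Sg * J) * (V * Λ - Sg * V) := by
  noncomm_ring

/-- Algebraic core of the Darboux transformation: if `V' = J V Λ + Q V` and
`Σ' = [JΣ + Q, Σ]`, then `U := VΛ − ΣV` satisfies `U' = J U Λ + (Q + [J,Σ]) U`. -/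
theorem darboux_transformed_system
    (n : ℕ) (J Λ : Matrix (Fin n) (Fin n) ℂ)
    (Q Sg V : ℝ → Matrix (Fin n) (Fin n) ℂ)
    (hV : ∀ t (i j : Fin n),
      HasDerivAt (fun s => V s i j) ((J * V t * Λ + Q t * V t) i j) t)
    (hSg : ∀ t (i j : Fin n),
      HasDerivAt (fun s => Sg s i j)
        (((J * Sg t + Q t) * Sg t - Sg t * (J * Sg t + Q t)) i j) t) :
    ∀ t (i j : Fin n),
      HasDerivAt (fun s => (V s * Λ - Sg s * V s) i j)
        ((J * (V t * Λ - Sg t * V t) * Λ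
          + (Q t + J * Sg t - Sg t * J) * (V t * Λ - Sg t * V t)) i j) t := by
  intro t i j
  have hVΛ := Matrix.hasDerivAt_mul_const_apply Λ (hV t) i j
  have hSgV := Matrix.hasDerivAt_mul_apply (hSg t) (hV t) i j
  rw [← darboux_derivative_eq, Matrix.sub_apply]
  simpa only [Matrix.sub_apply] using hVΛ.fun_sub hSgV
end

section
/- Let n ∈ ℕ, let J, Γ ∈ Mₙ(ℂ) be constant matrices, let Q : ℝ → Mₙ(ℂ) be continuous, and let S : ℝ → Mₙ(ℂ) be differentiable with S(t) invertible for every t and satisfying S'(t) = J·S(t)·Γ + Q(t)·S(t). Then Σ(t) := S(t)·Γ·S(t)⁻¹ satisfies Σ'(t) = (J·Σ(t) + Q(t))·Σ(t) − Σ(t)·(J·Σ(t) + Q(t)) for all t. -/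
set_option autoImplicit false

/-! By the product rule and `(S⁻¹)' = -S⁻¹ S' S⁻¹`, `Σ' = S' Γ S⁻¹ - Σ S' S⁻¹`. Substituting
`S' = J S Γ + Q S` gives `S' Γ S⁻¹ = J Σ² + Q Σ` (as `S Γ² S⁻¹ = Σ²`) and `Σ S' S⁻¹ = Σ J Σ + Σ Q`,
whose difference is `[J Σ + Q, Σ]`. This is an identity in any Banach algebra; for matrices the
entrywise derivatives assemble into a derivative for the operator norm. -/

theorem mul_mul_ringInverse_variation_eq_lie {R : Type*} [Ring R] {s : R} (hs : IsUnit s)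
    (J Γ Q : R) :
    (J * s * Γ + Q * s) * Γ * Ring.inverse s
        + s * Γ * -(Ring.inverse s * (J * s * Γ + Q * s) * Ring.inverse s)
      = ⁅J * (s * Γ * Ring.inverse s) + Q, s * Γ * Ring.inverse s⁆ := by
  have hl : ∀ x, Ring.inverse s * (s * x) = x := fun x => by
    rw [← mul_assoc, Ring.inverse_mul_cancel s hs, one_mul]
  simp only [Ring.lie_def, mul_neg, add_mul, mul_add, mul_assoc, hl,
    Ring.mul_inverse_cancel s hs, mul_one]
  abel

section BanachAlgebra

variable {𝕜 R : Type*} [NontriviallyNormedField 𝕜] [NormedRing R] [NormedAlgebra 𝕜 R]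
  [HasSummableGeomSeries R]

theorem HasDerivAt.ringInverse {f : 𝕜 → R} {f' : R} {t : 𝕜}
    (hf : HasDerivAt f f' t) (ht : IsUnit (f t)) :
    HasDerivAt (fun s => Ring.inverse (f s))
      (-(Ring.inverse (f t) * f' * Ring.inverse (f t))) t := by
  obtain ⟨u, hu⟩ := ht
  have hinv := hasFDerivAt_ringInverse (𝕜 := 𝕜) u
  rw [hu] at hinv
  rw [← hu, Ring.inverse_unit]
  exact hinv.comp_hasDerivAt t hf

theorem HasDerivAt.mul_mul_ringInverse_lie {S : 𝕜 → R} {J Γ Q : R} {t : 𝕜}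
    (hS : HasDerivAt S (J * S t * Γ + Q * S t) t) (ht : IsUnit (S t)) :
    HasDerivAt (fun s => S s * Γ * Ring.inverse (S s))
      ⁅J * (S t * Γ * Ring.inverse (S t)) + Q, S t * Γ * Ring.inverse (S t)⁆ t := by
  rw [← mul_mul_ringInverse_variation_eq_lie ht]
  exact (hS.mul_const Γ).mul (hS.ringInverse ht)

end BanachAlgebra

section Entrywise

-- Any norm would do for the entrywise lemma; this one makes matrices a normed algebra.
open scoped Matrix.Norms.Operator

theorem Matrix.hasDerivAt_iff_forall_apply {𝕜 m n α : Type*} [NontriviallyNormedField 𝕜]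
    [CompleteSpace 𝕜] [Fintype m] [Fintype n] [NormedAddCommGroup α] [NormedSpace 𝕜 α]
    [FiniteDimensional 𝕜 α] {f : 𝕜 → Matrix m n α} {f' : Matrix m n α} {t : 𝕜} :
    HasDerivAt f f' t ↔ ∀ i j, HasDerivAt (fun s => f s i j) (f' i j) t := by
  let e : Matrix m n α ≃L[𝕜] (m → n → α) :=
    (Matrix.ofLinearEquiv 𝕜).symm.toContinuousLinearEquiv
  have he : HasDerivAt f f' t ↔ HasDerivAt (fun s => e (f s)) (e f') t :=
    ⟨fun h => e.hasFDerivAt.comp_hasDerivAt t h,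
      fun h => e.symm.hasFDerivAt.comp_hasDerivAt t h⟩
  simp only [he, hasDerivAt_pi]
  rfl

end Entrywise

theorem darboux_dressing_matrix_evolution_general
    (n : ℕ) (J Γ : Matrix (Fin n) (Fin n) ℂ)
    (Q S : ℝ → Matrix (Fin n) (Fin n) ℂ)
    (hSunit : ∀ t, IsUnit (S t))
    (hS : ∀ t (i j : Fin n),
      HasDerivAt (fun s => S s i j) ((J * S t * Γ + Q t * S t) i j) t) :
    ∀ t (i j : Fin n),
      HasDerivAt (fun s => (S s * Γ * (S s)⁻¹) i j)
        (((J * (S t * Γ * (S t)⁻¹) + Q t) * (S t * Γ * (S t)⁻¹)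
          - (S t * Γ * (S t)⁻¹) * (J * (S t * Γ * (S t)⁻¹) + Q t)) i j) t := by
  intro t
  open scoped Matrix.Norms.Operator in
  · have hSmat : HasDerivAt S (J * S t * Γ + Q t * S t) t :=
      Matrix.hasDerivAt_iff_forall_apply.2 (hS t)
    have hσ := hSmat.mul_mul_ringInverse_lie (hSunit t)
    simp only [← Matrix.nonsing_inv_eq_ringInverse, Ring.lie_def] at hσ
    exact Matrix.hasDerivAt_iff_forall_apply.1 hσ

/-- Step in the proof of the Darboux theorem: the dressing matrix `Σ = S Γ S⁻¹`
built from a solution `S` of `S' = J S Γ + Q S` (with `S t` invertible)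
satisfies the commutator evolution `Σ' = [JΣ + Q, Σ]`. -/
theorem darboux_dressing_matrix_evolution
    (n : ℕ) (J Γ : Matrix (Fin n) (Fin n) ℂ)
    (Q S : ℝ → Matrix (Fin n) (Fin n) ℂ)
    (hQcont : Continuous Q)
    (hSunit : ∀ t, IsUnit (S t))
    (hS : ∀ t (i j : Fin n),
      HasDerivAt (fun s => S s i j) ((J * S t * Γ + Q t * S t) i j) t) :
    ∀ t (i j : Fin n),
      HasDerivAt (fun s => (S s * Γ * (S s)⁻¹) i j)
        (((J * (S t * Γ * (S t)⁻¹) + Q t) * (S t * Γ * (S t)⁻¹)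
          - (S t * Γ * (S t)⁻¹) * (J * (S t * Γ * (S t)⁻¹) + Q t)) i j) t :=
  darboux_dressing_matrix_evolution_general n J Γ Q S hSunit hS
end

section
/- Let q, λ ∈ ℂ and let φ₁, φ₂ ∈ ℂ with D := |φ₁|² + |φ₂|² ≠ 0. Let S = [[φ₁, conj(φ₂)], [φ₂, −conj(φ₁)]], Γ = diag(λ, conj(λ)), Σ = S·Γ·S⁻¹, J = diag(−i, i), and Q = [[0, q], [−conj(q), 0]]. Then the matrix Q̃ := Q + J·Σ − Σ·J has zero diagonal entries, its (1,2) entry equals q̃ := q + 2i(conj(λ) − λ)·φ₁·conj(φ₂)/D, and its (2,1) entry equals −conj(q̃). In particular, the Darboux update preserves the off-diagonal symmetry class of Zakharov-Shabat potential matrices. -/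
/-!
Writing `D = |φ₁|² + |φ₂|²`, the frame `S` satisfies `det S = -D` and `adj S = -Sᴴ`, so
`S⁻¹ = D⁻¹ Sᴴ`; this also holds when `D = 0`, where both sides are `0` (Mathlib's inverse of a
singular matrix is `0`, and `S = 0`). Hence `Σ = D⁻¹ S Γ Sᴴ`, whose off-diagonal entries are
`(λ - λ̄) φ₁ φ̄₂ / D` and `(λ - λ̄) φ̄₁ φ₂ / D`. Commuting with the diagonal `J = diag(-i, i)`
annihilates the diagonal and scales these entries by `-2i` and `2i`, which gives `q̃` and `-q̃̄`.
-/

open Matrix ComplexConjugate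

theorem Matrix.commutator_diag_fin_two {R : Type*} [CommRing R] (a b : R)
    (M : Matrix (Fin 2) (Fin 2) R) :
    !![a, 0; 0, b] * M - M * !![a, 0; 0, b] = !![0, (a - b) * M 0 1; (b - a) * M 1 0, 0] := by
  rw [eta_fin_two M, mul_fin_two, mul_fin_two]
  ext i j; fin_cases i <;> fin_cases j <;> simp <;> ring

def darbouxFrame (φ1 φ2 : ℂ) : Matrix (Fin 2) (Fin 2) ℂ :=
  !![φ1, conj φ2; φ2, -conj φ1]

theorem darbouxFrame_conjTranspose (φ1 φ2 : ℂ) :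
    (darbouxFrame φ1 φ2)ᴴ = !![conj φ1, conj φ2; φ2, -φ1] := by
  ext i j; fin_cases i <;> fin_cases j <;> simp [darbouxFrame]

theorem darbouxFrame_det (φ1 φ2 : ℂ) :
    (darbouxFrame φ1 φ2).det = -((‖φ1‖ ^ 2 + ‖φ2‖ ^ 2 : ℝ) : ℂ) := by
  rw [darbouxFrame, det_fin_two_of]
  push_cast
  rw [← Complex.mul_conj', ← Complex.mul_conj']
  ring

theorem darbouxFrame_adjugate (φ1 φ2 : ℂ) :
    (darbouxFrame φ1 φ2).adjugate = -(darbouxFrame φ1 φ2)ᴴ := by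
  rw [darbouxFrame_conjTranspose, darbouxFrame, adjugate_fin_two_of]
  simp

theorem darbouxFrame_inv (φ1 φ2 : ℂ) :
    (darbouxFrame φ1 φ2)⁻¹ = ((‖φ1‖ ^ 2 + ‖φ2‖ ^ 2 : ℝ) : ℂ)⁻¹ • (darbouxFrame φ1 φ2)ᴴ := by
  rw [inv_def, darbouxFrame_det, darbouxFrame_adjugate, Ring.inverse_eq_inv', smul_neg, inv_neg,
    neg_smul, neg_neg]

theorem darbouxFrame_mul_diag_mul_inv_offDiag (φ1 φ2 lam : ℂ) :
    (darbouxFrame φ1 φ2 * !![lam, 0; 0, conj lam] * (darbouxFrame φ1 φ2)⁻¹) 0 1 =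
        (lam - conj lam) * φ1 * conj φ2 / ((‖φ1‖ ^ 2 + ‖φ2‖ ^ 2 : ℝ) : ℂ) ∧
      (darbouxFrame φ1 φ2 * !![lam, 0; 0, conj lam] * (darbouxFrame φ1 φ2)⁻¹) 1 0 =
        (lam - conj lam) * conj φ1 * φ2 / ((‖φ1‖ ^ 2 + ‖φ2‖ ^ 2 : ℝ) : ℂ) := by
  rw [darbouxFrame_inv, mul_smul_comm, darbouxFrame_conjTranspose, darbouxFrame, mul_fin_two,
    mul_fin_two]
  constructor <;> simp <;> ring

theorem darboux_potential_update_general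
    (q lam φ1 φ2 : ℂ) :
    let S : Matrix (Fin 2) (Fin 2) ℂ :=
      !![φ1, (starRingEnd ℂ) φ2; φ2, -(starRingEnd ℂ) φ1]
    let Γ : Matrix (Fin 2) (Fin 2) ℂ := !![lam, 0; 0, (starRingEnd ℂ) lam]
    let Sg : Matrix (Fin 2) (Fin 2) ℂ := S * Γ * S⁻¹
    let J : Matrix (Fin 2) (Fin 2) ℂ := !![-Complex.I, 0; 0, Complex.I]
    let Q : Matrix (Fin 2) (Fin 2) ℂ := !![0, q; -(starRingEnd ℂ) q, 0]
    let Qt : Matrix (Fin 2) (Fin 2) ℂ := Q + J * Sg - Sg * J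
    let qtil : ℂ := q + 2 * Complex.I * ((starRingEnd ℂ) lam - lam) * φ1 *
      (starRingEnd ℂ) φ2 /
      (((‖φ1‖ ^ 2 + ‖φ2‖ ^ 2 : ℝ)) : ℂ)
    Qt 0 0 = 0 ∧ Qt 1 1 = 0 ∧ Qt 0 1 = qtil ∧ Qt 1 0 = -(starRingEnd ℂ) qtil := by
  intro S Γ Sg J Q Qt qtil
  obtain ⟨hSg01, hSg10⟩ : Sg 0 1 = _ ∧ Sg 1 0 = _ :=
    darbouxFrame_mul_diag_mul_inv_offDiag φ1 φ2 lam
  have hQt : Qt = Q + !![0, (-Complex.I - Complex.I) * Sg 0 1;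
      (Complex.I - -Complex.I) * Sg 1 0, 0] := by
    rw [← commutator_diag_fin_two]
    exact add_sub_assoc ..
  simp only [hQt, Q, qtil, hSg01, hSg10, Matrix.add_apply, of_apply, cons_val', cons_val_zero,
    cons_val_one, empty_val', cons_val_fin_one, map_add, map_mul, map_sub, map_div₀, map_ofNat,
    Complex.conj_I, Complex.conj_conj, Complex.conj_ofReal]
  refine ⟨?_, ?_, ?_, ?_⟩ <;> ring

/-- The Darboux update `Q̃ = Q + [J, Σ]` with `Σ = S Γ S⁻¹` preserves the
off-diagonal symmetry class of Zakharov-Shabat potential matrices, and its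
off-diagonal entry is the signal update
`q̃ = q + 2i(conj λ − λ) φ₁ conj φ₂ / (|φ₁|² + |φ₂|²)`. -/
theorem darboux_potential_update
    (q lam φ1 φ2 : ℂ)
    (hD : ‖φ1‖ ^ 2 + ‖φ2‖ ^ 2 ≠ 0) :
    let S : Matrix (Fin 2) (Fin 2) ℂ :=
      !![φ1, (starRingEnd ℂ) φ2; φ2, -(starRingEnd ℂ) φ1]
    let Γ : Matrix (Fin 2) (Fin 2) ℂ := !![lam, 0; 0, (starRingEnd ℂ) lam]
    let Sg : Matrix (Fin 2) (Fin 2) ℂ := S * Γ * S⁻¹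
    let J : Matrix (Fin 2) (Fin 2) ℂ := !![-Complex.I, 0; 0, Complex.I]
    let Q : Matrix (Fin 2) (Fin 2) ℂ := !![0, q; -(starRingEnd ℂ) q, 0]
    let Qt : Matrix (Fin 2) (Fin 2) ℂ := Q + J * Sg - Sg * J
    let qtil : ℂ := q + 2 * Complex.I * ((starRingEnd ℂ) lam - lam) * φ1 *
      (starRingEnd ℂ) φ2 /
      (((‖φ1‖ ^ 2 + ‖φ2‖ ^ 2 : ℝ)) : ℂ)
    Qt 0 0 = 0 ∧ Qt 1 1 = 0 ∧ Qt 0 1 = qtil ∧ Qt 1 0 = -(starRingEnd ℂ) qtil :=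
  darboux_potential_update_general q lam φ1 φ2
end

section
/- Let q : ℝ → ℂ be continuous and λ, μ ∈ ℂ. Suppose φ = (φ₁, φ₂) : ℝ → ℂ² is differentiable, satisfies the Zakharov-Shabat system with parameter λ (φ₁' = −iλφ₁ + qφ₂, φ₂' = −q̄φ₁ + iλφ₂), and D(t) := |φ₁(t)|² + |φ₂(t)|² > 0 for all t. Let S(t) = [[φ₁, conj(φ₂)], [φ₂, −conj(φ₁)]], Σ(t) = S(t)·diag(λ, conj(λ))·S(t)⁻¹, and define the transformed potential q̃(t) := q(t) + 2i(conj(λ) − λ)·φ₁(t)·conj(φ₂(t))/D(t). If v : ℝ → ℂ² is differentiable and satisfies the Zakharov-Shabat system with potential q and parameter μ, then u(t) := (μ·I − Σ(t))·v(t) satisfies the Zakharov-Shabat system with potential q̃ and parameter μ: u₁' = −iμu₁ + q̃u₂, u₂' = −conj(q̃)u₁ + iμu₂. -/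
set_option autoImplicit false

/-!
The columns of `S` are `φ` and its orthogonal complement `(φ̄₂, -φ̄₁)`, so `S` is `|φ|` times a
unitary matrix and `Σ = λ̄ I + (λ - λ̄) φφ*/|φ|²`; hence `u = (μ - λ̄) v - (λ - λ̄) (⟨φ, v⟩ / |φ|²) φ`.
For solutions `φ` at `λ` and `v` at `μ` the potential drops out of the derivative of the pairing,
`⟨φ, v⟩' = i (λ̄ - μ) (φ̄₁ v₁ - φ̄₂ v₂)`; with `v = φ` this also gives `(|φ|²)'`, and the quotient
rule turns the system for `v` into the system for `u` with the potential `q̃`.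
-/

open Complex ComplexConjugate Matrix

namespace ZakharovShabat

def frame (a b : ℂ) : Matrix (Fin 2) (Fin 2) ℂ :=
  !![a, conj b; b, -conj a]

theorem frame_mul_conjTranspose (a b : ℂ) :
    frame a b * (frame a b)ᴴ = (conj a * a + conj b * b) • 1 := by
  ext i j
  fin_cases i <;> fin_cases j <;> simp [frame, mul_apply, Fin.sum_univ_two] <;> ring

theorem frame_inv {a b : ℂ} (h : conj a * a + conj b * b ≠ 0) :
    (frame a b)⁻¹ = (conj a * a + conj b * b)⁻¹ • (frame a b)ᴴ := by
  refine inv_eq_right_inv ?_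
  rw [Matrix.mul_smul, frame_mul_conjTranspose, smul_smul, inv_mul_cancel₀ h, one_smul]

theorem frame_mul_diag_mul_conjTranspose (a b lam : ℂ) :
    frame a b * !![lam, 0; 0, conj lam] * (frame a b)ᴴ =
      (conj lam * (conj a * a + conj b * b)) • 1 +
        (lam - conj lam) • vecMulVec ![a, b] (star ![a, b]) := by
  ext i j
  fin_cases i <;> fin_cases j <;> simp [frame, vecMulVec, mul_apply, Fin.sum_univ_two] <;> ring

theorem frame_mul_diag_mul_frame_inv {a b : ℂ} (lam : ℂ) (h : conj a * a + conj b * b ≠ 0) :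
    frame a b * !![lam, 0; 0, conj lam] * (frame a b)⁻¹ =
      conj lam • 1 + ((lam - conj lam) / (conj a * a + conj b * b)) •
        vecMulVec ![a, b] (star ![a, b]) := by
  rw [frame_inv h, Matrix.mul_smul, frame_mul_diag_mul_conjTranspose, smul_add, smul_smul, smul_smul]
  congr 2
  · field_simp
  · ring

theorem frame_mul_diag_mul_frame_inv_apply {a b : ℂ} (lam mu x y : ℂ)
    (h : conj a * a + conj b * b ≠ 0) :
    let Sg := frame a b * !![lam, 0; 0, conj lam] * (frame a b)⁻¹
    mu * x - (Sg 0 0 * x + Sg 0 1 * y) = (mu - conj lam) * x -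
        (lam - conj lam) * ((conj a * x + conj b * y) / (conj a * a + conj b * b)) * a ∧
      mu * y - (Sg 1 0 * x + Sg 1 1 * y) = (mu - conj lam) * y -
        (lam - conj lam) * ((conj a * x + conj b * y) / (conj a * a + conj b * b)) * b := by
  simp only [frame_mul_diag_mul_frame_inv lam h, one_fin_two, Matrix.add_apply, Matrix.smul_apply,
    of_apply, vecMulVec_apply, cons_val_zero, cons_val_one, cons_val_fin_one, Pi.star_apply,
    RCLike.star_def, smul_eq_mul]
  constructor <;> ring

def IsSolution (q : ℝ → ℂ) (ζ : ℂ) (w1 w2 : ℝ → ℂ) : Prop :=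
  ∀ t, HasDerivAt w1 (-I * ζ * w1 t + q t * w2 t) t ∧
    HasDerivAt w2 (-conj (q t) * w1 t + I * ζ * w2 t) t

def pairing (φ1 φ2 v1 v2 : ℝ → ℂ) (t : ℝ) : ℂ :=
  conj (φ1 t) * v1 t + conj (φ2 t) * v2 t

theorem pairing_self (φ1 φ2 : ℝ → ℂ) (t : ℝ) :
    pairing φ1 φ2 φ1 φ2 t = ((‖φ1 t‖ ^ 2 + ‖φ2 t‖ ^ 2 : ℝ) : ℂ) := by
  simp only [pairing, Complex.sq_norm, Complex.ofReal_add, Complex.normSq_eq_conj_mul_self]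

variable {q : ℝ → ℂ} {lam mu : ℂ} {φ1 φ2 v1 v2 : ℝ → ℂ}

theorem IsSolution.hasDerivAt_pairing (hφ : IsSolution q lam φ1 φ2)
    (hv : IsSolution q mu v1 v2) (t : ℝ) :
    HasDerivAt (pairing φ1 φ2 v1 v2)
      (I * (conj lam - mu) * (conj (φ1 t) * v1 t - conj (φ2 t) * v2 t)) t := by
  refine (((hφ t).1.star.fun_mul (hv t).1).fun_add ((hφ t).2.star.fun_mul (hv t).2)).congr_deriv ?_
  simp only [star_add, star_mul', star_neg, Complex.star_def, conj_I, conj_conj]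
  ring

theorem IsSolution.darboux (hφ : IsSolution q lam φ1 φ2) (hv : IsSolution q mu v1 v2)
    (hD : ∀ t, pairing φ1 φ2 φ1 φ2 t ≠ 0) :
    IsSolution
      (fun t => q t + 2 * I * (conj lam - lam) * φ1 t * conj (φ2 t) / pairing φ1 φ2 φ1 φ2 t) mu
      (fun t => (mu - conj lam) * v1 t -
        (lam - conj lam) * (pairing φ1 φ2 v1 v2 t / pairing φ1 φ2 φ1 φ2 t) * φ1 t)
      (fun t => (mu - conj lam) * v2 t -
        (lam - conj lam) * (pairing φ1 φ2 v1 v2 t / pairing φ1 φ2 φ1 φ2 t) * φ2 t) := by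
  intro t
  have hcoef := ((hφ.hasDerivAt_pairing hv t).fun_div (hφ.hasDerivAt_pairing hφ t) (hD t)).const_mul
    (lam - conj lam)
  have hDt := hD t
  constructor
  · refine (((hv t).1.const_mul (mu - conj lam)).fun_sub (hcoef.fun_mul (hφ t).1)).congr_deriv ?_
    simp only [pairing] at hDt ⊢
    field_simp
    ring
  · refine (((hv t).2.const_mul (mu - conj lam)).fun_sub (hcoef.fun_mul (hφ t).2)).congr_deriv ?_
    simp only [pairing, map_add, map_mul, map_sub, map_div₀, map_ofNat, conj_conj, conj_I] at hDt ⊢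
    field_simp
    ring

end ZakharovShabat

open ZakharovShabat

theorem darboux_eigenvector_update_general
    (q : ℝ → ℂ) (lam mu : ℂ) (φ1 φ2 v1 v2 : ℝ → ℂ)
    (hφ1 : ∀ t, HasDerivAt φ1 (-Complex.I * lam * φ1 t + q t * φ2 t) t)
    (hφ2 : ∀ t, HasDerivAt φ2
      (-(starRingEnd ℂ) (q t) * φ1 t + Complex.I * lam * φ2 t) t)
    (hD : ∀ t, 0 < ‖φ1 t‖ ^ 2 + ‖φ2 t‖ ^ 2)
    (hv1 : ∀ t, HasDerivAt v1 (-Complex.I * mu * v1 t + q t * v2 t) t)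
    (hv2 : ∀ t, HasDerivAt v2
      (-(starRingEnd ℂ) (q t) * v1 t + Complex.I * mu * v2 t) t) :
    let S : ℝ → Matrix (Fin 2) (Fin 2) ℂ := fun t =>
      !![φ1 t, (starRingEnd ℂ) (φ2 t); φ2 t, -(starRingEnd ℂ) (φ1 t)]
    let Sg : ℝ → Matrix (Fin 2) (Fin 2) ℂ := fun t =>
      S t * !![lam, 0; 0, (starRingEnd ℂ) lam] * (S t)⁻¹
    let qtil : ℝ → ℂ := fun t =>
      q t + 2 * Complex.I * ((starRingEnd ℂ) lam - lam) * φ1 t *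
        (starRingEnd ℂ) (φ2 t) /
        (((‖φ1 t‖ ^ 2 + ‖φ2 t‖ ^ 2 : ℝ)) : ℂ)
    let u1 : ℝ → ℂ := fun t => mu * v1 t - (Sg t 0 0 * v1 t + Sg t 0 1 * v2 t)
    let u2 : ℝ → ℂ := fun t => mu * v2 t - (Sg t 1 0 * v1 t + Sg t 1 1 * v2 t)
    ∀ t, HasDerivAt u1 (-Complex.I * mu * u1 t + qtil t * u2 t) t
      ∧ HasDerivAt u2
          (-(starRingEnd ℂ) (qtil t) * u1 t + Complex.I * mu * u2 t) t := by
  intro S Sg qtil u1 u2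
  have hφ : IsSolution q lam φ1 φ2 := fun t => ⟨hφ1 t, hφ2 t⟩
  have hv : IsSolution q mu v1 v2 := fun t => ⟨hv1 t, hv2 t⟩
  have hD' : ∀ t, pairing φ1 φ2 φ1 φ2 t ≠ 0 := fun t => by
    rw [pairing_self]
    exact_mod_cast (hD t).ne'
  have hqtil : qtil = fun t =>
      q t + 2 * I * (conj lam - lam) * φ1 t * conj (φ2 t) / pairing φ1 φ2 φ1 φ2 t := by
    funext t
    rw [pairing_self]
  have hu1 : u1 = fun t => (mu - conj lam) * v1 t -
      (lam - conj lam) * (pairing φ1 φ2 v1 v2 t / pairing φ1 φ2 φ1 φ2 t) * φ1 t :=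
    funext fun t => (frame_mul_diag_mul_frame_inv_apply lam mu (v1 t) (v2 t) (hD' t)).1
  have hu2 : u2 = fun t => (mu - conj lam) * v2 t -
      (lam - conj lam) * (pairing φ1 φ2 v1 v2 t / pairing φ1 φ2 φ1 φ2 t) * φ2 t :=
    funext fun t => (frame_mul_diag_mul_frame_inv_apply lam mu (v1 t) (v2 t) (hD' t)).2
  show IsSolution qtil mu u1 u2
  rw [hqtil, hu1, hu2]
  exact hφ.darboux hv hD'

/-- Darboux transformation for the Zakharov-Shabat system: from an eigenvector
solution `φ` at parameter `λ`, every solution `v` at parameter `μ` is mapped to a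
solution `u = (μI − Σ)v` of the Zakharov-Shabat system with the updated potential
`q̃ = q + 2i(conj λ − λ) φ₁ conj φ₂ / (|φ₁|² + |φ₂|²)`. -/
theorem darboux_eigenvector_update
    (q : ℝ → ℂ) (hq : Continuous q) (lam mu : ℂ) (φ1 φ2 v1 v2 : ℝ → ℂ)
    (hφ1 : ∀ t, HasDerivAt φ1 (-Complex.I * lam * φ1 t + q t * φ2 t) t)
    (hφ2 : ∀ t, HasDerivAt φ2
      (-(starRingEnd ℂ) (q t) * φ1 t + Complex.I * lam * φ2 t) t)
    (hD : ∀ t, 0 < ‖φ1 t‖ ^ 2 + ‖φ2 t‖ ^ 2)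
    (hv1 : ∀ t, HasDerivAt v1 (-Complex.I * mu * v1 t + q t * v2 t) t)
    (hv2 : ∀ t, HasDerivAt v2
      (-(starRingEnd ℂ) (q t) * v1 t + Complex.I * mu * v2 t) t) :
    let S : ℝ → Matrix (Fin 2) (Fin 2) ℂ := fun t =>
      !![φ1 t, (starRingEnd ℂ) (φ2 t); φ2 t, -(starRingEnd ℂ) (φ1 t)]
    let Sg : ℝ → Matrix (Fin 2) (Fin 2) ℂ := fun t =>
      S t * !![lam, 0; 0, (starRingEnd ℂ) lam] * (S t)⁻¹
    let qtil : ℝ → ℂ := fun t =>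
      q t + 2 * Complex.I * ((starRingEnd ℂ) lam - lam) * φ1 t *
        (starRingEnd ℂ) (φ2 t) /
        (((‖φ1 t‖ ^ 2 + ‖φ2 t‖ ^ 2 : ℝ)) : ℂ)
    let u1 : ℝ → ℂ := fun t => mu * v1 t - (Sg t 0 0 * v1 t + Sg t 0 1 * v2 t)
    let u2 : ℝ → ℂ := fun t => mu * v2 t - (Sg t 1 0 * v1 t + Sg t 1 1 * v2 t)
    ∀ t, HasDerivAt u1 (-Complex.I * mu * u1 t + qtil t * u2 t) t
      ∧ HasDerivAt u2
          (-(starRingEnd ℂ) (qtil t) * u1 t + Complex.I * mu * u2 t) t :=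
  darboux_eigenvector_update_general q lam mu φ1 φ2 v1 v2 hφ1 hφ2 hD hv1 hv2
end
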